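/- arXiv:1803.03537 — 2 statements merged into one kernel-verified Lean document; each statement's English description precedes it below -/
import Mathlib

section
/- (Theorem 2 of the paper.) Consider the Max-plus linear train dynamics on a metro line of n segments indexed by j ∈ ℤ/nℤ: d^k_j = max( d^{k−b_j}_{j−1} + t_j, d^{k−(1−b_{j+1})}_{j+1} + s_{j+1} ) for all k ≥ 1, where b_j ∈ {0,1}, m = Σ_j b_j with 0 < m < n, the demand-dependent travel times are t_j = g_j·X_j + r̃_j > 0 with X_j ≥ 0, g_j > 0, r̃_j > 0, and the safe separation times satisfy s_j > 0. Then the average asymptotic growth rate lim_{k→∞} d^k_j / k exists, is the same for every j, and equals the average asymptotic train time-headway h(m,X) = max{ (Σ_j (g_j·X_j + r̃_j))/m , max_j (g_j·X_j + r̃_j + s_j) , (Σ_j s_j)/(n−m) }. -/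
/-!
Write `λ` for the headway `h(m, X)`. Each of its three terms is the mean weight per unit of delay
of a circuit of the event graph: the forward loop around the line (weight `Σ t`, delay `m`), a
single segment and its neighbour (weight `t j + s j`, delay `1`), and the backward loop (weight
`Σ s`, delay `n - m`). Following the circuit that attains `λ` gives `d k j ≥ λ k - C`.
Conversely `λ` dominates all three, so the constraints `t j - λ b j ≤ v j - v (j - 1) ≤
λ (1 - b j) - s j` on the increments of a potential `v` are feasible with increments summing to
zero around the cycle; such a `v` is a sub-eigenvector and gives `d k j ≤ v j + λ k + C`.
-/

open Filter Finset Topology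

lemma sum_range_natCast_zmod {n : ℕ} [NeZero n] {M : Type*} [AddCommMonoid M]
    (f : ZMod n → M) : ∑ i ∈ range n, f i = ∑ x, f x :=
  sum_nbij' (↑) ZMod.val (fun _ _ => mem_univ _) (fun x _ => mem_range.2 x.val_lt)
    (fun _ ha => ZMod.val_cast_of_lt (mem_range.1 ha)) (fun x _ => ZMod.natCast_zmod_val x)
    (fun _ _ => rfl)

lemma sum_range_add_natCast_zmod {n : ℕ} [NeZero n] {M : Type*} [AddCommMonoid M]
    (f : ZMod n → M) (j : ZMod n) : ∑ i ∈ range n, f (j + i) = ∑ x, f x := by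
  rw [sum_range_natCast_zmod (fun x => f (j + x))]
  exact Fintype.sum_equiv (Equiv.addLeft j) _ _ fun _ => rfl

lemma sum_range_sub_natCast_zmod {n : ℕ} [NeZero n] {M : Type*} [AddCommMonoid M]
    (f : ZMod n → M) (j : ZMod n) : ∑ i ∈ range n, f (j - i) = ∑ x, f x := by
  rw [sum_range_natCast_zmod (fun x => f (j - x))]
  exact Fintype.sum_equiv (Equiv.subLeft j) _ _ fun _ => rfl

lemma ZMod.exists_sub_sub_one_eq {n : ℕ} [NeZero n] {G : Type*} [AddCommGroup G]
    {u : ZMod n → G} (hu : ∑ x, u x = 0) : ∃ v : ZMod n → G, ∀ x, v x - v (x - 1) = u x := by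
  set V : ℕ → G := fun k => ∑ i ∈ range k, u (i + 1 : ℕ)
  have hV : Function.Periodic V n := fun k => by
    have hloop : ∑ i ∈ range n, u ((k + i + 1 : ℕ) : ZMod n) = 0 := by
      push_cast
      simp_rw [add_right_comm _ _ (1 : ZMod n)]
      exact (sum_range_add_natCast_zmod u _).trans hu
    simp only [V, sum_range_add, hloop, add_zero]
  refine ⟨fun x => V x.val, fun x => ?_⟩
  have hx : ((x - 1).val + 1 : ℕ) = x := by push_cast; simp
  calc V x.val - V (x - 1).val = V ((x - 1).val + 1) - V (x - 1).val := by
        rw [← hV.map_mod_nat ((x - 1).val + 1), ← ZMod.val_natCast, hx]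
    _ = u x := by simp only [V, sum_range_succ, hx, add_sub_cancel_left]

lemma sum_one_sub_eq_card_sub_sum {ι : Type*} [Fintype ι] {b : ι → ℕ} (hb : ∀ j, b j ≤ 1) :
    ∑ x, (1 - b x) = Fintype.card ι - ∑ x, b x := by
  refine eq_tsub_of_add_eq ?_
  rw [← sum_add_distrib, sum_congr rfl fun x _ => Nat.sub_add_cancel (hb x)]
  simp

lemma exists_sum_eq_of_le_of_le {ι : Type*} [Fintype ι] {L U : ι → ℝ} (hLU : ∀ i, L i ≤ U i)
    {c : ℝ} (hL : ∑ i, L i ≤ c) (hU : c ≤ ∑ i, U i) :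
    ∃ u : ι → ℝ, (∀ i, L i ≤ u i ∧ u i ≤ U i) ∧ ∑ i, u i = c := by
  set u : ℝ → ι → ℝ := fun θ i => L i + θ * (U i - L i)
  have hcont : ContinuousOn (fun θ => ∑ i, u θ i) (Set.Icc 0 1) := by fun_prop
  obtain ⟨θ, ⟨hθ0, hθ1⟩, hθ⟩ :=
    intermediate_value_Icc zero_le_one hcont ⟨by simpa [u] using hL, by simpa [u] using hU⟩
  refine ⟨u θ, fun i => ⟨?_, ?_⟩, hθ⟩ <;> nlinarith [hLU i]

lemma exists_potential {n : ℕ} [NeZero n] {b : ZMod n → ℕ} {t s : ZMod n → ℝ} {μ : ℝ}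
    (hts : ∀ j, t j + s j ≤ μ) (hT : ∑ j, t j ≤ μ * ∑ j, (b j : ℝ))
    (hS : ∑ j, s j ≤ μ * ∑ j, (1 - (b j : ℝ))) :
    ∃ v : ZMod n → ℝ, ∀ j,
      v (j - 1) + t j ≤ v j + μ * b j ∧ v j + s j ≤ v (j - 1) + μ * (1 - b j) := by
  obtain ⟨u, hu, hu0⟩ := exists_sum_eq_of_le_of_le (L := fun j => t j - μ * b j)
    (U := fun j => μ * (1 - b j) - s j) (c := 0) (fun j => by linarith [hts j])
    (by rw [sum_sub_distrib, ← mul_sum]; linarith) (by rw [sum_sub_distrib, ← mul_sum]; linarith)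
  obtain ⟨v, hv⟩ := ZMod.exists_sub_sub_one_eq hu0
  exact ⟨v, fun j => ⟨by linarith [hv j, (hu j).1], by linarith [hv j, (hu j).2]⟩⟩

lemma exists_div_mul_sub_le_of_add_le {f : ℕ → ℝ} {p K : ℕ} {w : ℝ} (hp : 0 < p)
    (hf : ∀ k, K ≤ k → f (k - p) + w ≤ f k) : ∃ C, ∀ k, w / p * k - C ≤ f k := by
  obtain ⟨C, hC⟩ := Finite.exists_le fun k : Fin (K + p) => w / p * k - f k
  refine ⟨C, fun k => ?_⟩
  induction k using Nat.strong_induction_on with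
  | _ k ih =>
    by_cases hk : k < K + p
    · linarith [hC ⟨k, hk⟩]
    · have hprev := ih (k - p) (by omega)
      have hcast : ((k - p : ℕ) : ℝ) = k - p := Nat.cast_sub (by omega)
      have hrate : w / p * p = w := div_mul_cancel₀ w (by positivity)
      rw [hcast] at hprev
      linarith [hf k (by omega)]

lemma tendsto_div_of_mul_sub_le_of_le_mul_add {f : ℕ → ℝ} {μ C₁ C₂ : ℝ}
    (hlow : ∀ᶠ k in atTop, μ * k - C₁ ≤ f k) (hup : ∀ᶠ k in atTop, f k ≤ μ * k + C₂) :
    Tendsto (fun k => f k / k) atTop (𝓝 μ) := by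
  have hlim (C : ℝ) : Tendsto (fun k : ℕ => μ + C / k) atTop (𝓝 μ) := by
    simpa using tendsto_const_nhds.add (tendsto_const_div_atTop_nhds_zero_nat C)
  have hmul {k : ℕ} (hk : 0 < k) (C : ℝ) : (μ + C / k) * k = μ * k + C := by
    field_simp
  refine tendsto_of_tendsto_of_tendsto_of_le_of_le' (hlim (-C₁)) (hlim C₂) ?_ ?_
  · filter_upwards [hlow, eventually_gt_atTop 0] with k hk hk0
    rw [le_div_iff₀ (by positivity), hmul hk0]
    linarith
  · filter_upwards [hup, eventually_gt_atTop 0] with k hk hk0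
    rw [div_le_iff₀ (by positivity), hmul hk0]
    exact hk

lemma add_sum_le_of_iterate {ι : Type*} {d : ℕ → ι → ℝ} {σ : ι → ι} {δ : ι → ℕ} {w : ι → ℝ}
    (hδ : ∀ j, δ j ≤ 1) (hstep : ∀ k, 1 ≤ k → ∀ j, d (k - δ j) (σ j) + w j ≤ d k j)
    {p k : ℕ} (hpk : p ≤ k) (j : ι) :
    d (k - ∑ i ∈ range p, δ (σ^[i] j)) (σ^[p] j) + ∑ i ∈ range p, w (σ^[i] j) ≤ d k j := by
  induction p with
  | zero => simp
  | succ p ih =>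
    have hδp : ∑ i ∈ range p, δ (σ^[i] j) ≤ p := by
      simpa using sum_le_card_nsmul (range p) _ 1 fun i _ => hδ (σ^[i] j)
    have hlast := hstep (k - ∑ i ∈ range p, δ (σ^[i] j)) (by omega) (σ^[p] j)
    rw [Nat.sub_sub, ← sum_range_succ, ← Function.iterate_succ_apply' σ] at hlast
    rw [sum_range_succ (fun i => w (σ^[i] j))]
    linarith [ih (by omega)]

def IsTrainDynamics {n : ℕ} (b : ZMod n → ℕ) (t s : ZMod n → ℝ) (d : ℕ → ZMod n → ℝ) : Prop :=
  ∀ k, 1 ≤ k → ∀ j,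
    d k j = max (d (k - b j) (j - 1) + t j) (d (k - (1 - b (j + 1))) (j + 1) + s (j + 1))

/-- The average asymptotic train time-headway `h(m, X)`, with `t j = g j * X j + r̃ j`. -/
noncomputable def headway {n : ℕ} [NeZero n] (m : ℕ) (t s : ZMod n → ℝ) : ℝ :=
  max (max ((∑ i, t i) / m) (univ.sup' univ_nonempty fun i => t i + s i))
    ((∑ i, s i) / ((n : ℝ) - m))

namespace IsTrainDynamics

variable {n : ℕ} {b : ZMod n → ℕ} {t s : ZMod n → ℝ} {d : ℕ → ZMod n → ℝ}

lemma forward_le (h : IsTrainDynamics b t s d) {k : ℕ} (hk : 1 ≤ k) (j : ZMod n) :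
    d (k - b j) (j - 1) + t j ≤ d k j :=
  (h k hk j).symm ▸ le_max_left _ _

lemma backward_le (h : IsTrainDynamics b t s d) {k : ℕ} (hk : 1 ≤ k) (j : ZMod n) :
    d (k - (1 - b (j + 1))) (j + 1) + s (j + 1) ≤ d k j :=
  (h k hk j).symm ▸ le_max_right _ _

lemma pair_le (h : IsTrainDynamics b t s d) (hb : ∀ j, b j ≤ 1) {k : ℕ} (hk : 2 ≤ k)
    (j : ZMod n) : d (k - 1) j + (t j + s j) ≤ d k j := by
  have hbj := hb j
  have hback := h.backward_le (k := k - b j) (by omega) (j - 1)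
  rw [sub_add_cancel, Nat.sub_sub, Nat.add_sub_cancel' hbj] at hback
  linarith [h.forward_le (k := k) (by omega) j]

lemma forward_path_le (h : IsTrainDynamics b t s d) (hb : ∀ j, b j ≤ 1) {p k : ℕ} (hpk : p ≤ k)
    (j : ZMod n) :
    d (k - ∑ i ∈ range p, b (j - i)) (j - p) + ∑ i ∈ range p, t (j - i) ≤ d k j := by
  have hiter (i : ℕ) : (· - 1 : ZMod n → ZMod n)^[i] j = j - i := by
    simpa [← sub_eq_add_neg] using add_right_iterate_apply (n := i) (-1 : ZMod n) j
  simpa only [hiter] using add_sum_le_of_iterate hb (fun k hk j => h.forward_le hk j) hpk j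

lemma backward_path_le (h : IsTrainDynamics b t s d) {p k : ℕ} (hpk : p ≤ k) (j : ZMod n) :
    d (k - ∑ i ∈ range p, (1 - b (j + i + 1))) (j + p) + ∑ i ∈ range p, s (j + i + 1) ≤
      d k j := by
  have hiter (i : ℕ) : (· + 1 : ZMod n → ZMod n)^[i] j = j + i := by
    simp [add_right_iterate_apply]
  simpa only [hiter] using add_sum_le_of_iterate (δ := fun j => 1 - b (j + 1))
    (w := fun j => s (j + 1)) (fun j => Nat.sub_le 1 _) (fun k hk j => h.backward_le hk j) hpk j

variable [NeZero n]

lemma forward_loop_le (h : IsTrainDynamics b t s d) (hb : ∀ j, b j ≤ 1) {k : ℕ} (hk : n ≤ k)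
    (j : ZMod n) : d (k - ∑ x, b x) j + ∑ x, t x ≤ d k j := by
  simpa [sum_range_sub_natCast_zmod] using h.forward_path_le hb hk j

lemma backward_loop_le (h : IsTrainDynamics b t s d) (hb : ∀ j, b j ≤ 1) {k : ℕ} (hk : n ≤ k)
    (j : ZMod n) : d (k - (n - ∑ x, b x)) j + ∑ x, s x ≤ d k j := by
  have hpath := h.backward_path_le hk j
  simp_rw [add_right_comm j _ (1 : ZMod n), sum_range_add_natCast_zmod (fun x => 1 - b x),
    sum_range_add_natCast_zmod s, sum_one_sub_eq_card_sub_sum hb, ZMod.card] at hpath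
  simpa using hpath

lemma exists_le_sub_card_le (h : IsTrainDynamics b t s d) (hb : ∀ j, b j ≤ 1)
    (ht : ∀ j, 0 ≤ t j) (i j : ZMod n) {k : ℕ} (hk : n ≤ k) :
    ∃ k', k - n ≤ k' ∧ d k' i ≤ d k j := by
  set p := (j - i).val
  have hp : p < n := ZMod.val_lt _
  have hdelay : ∑ x ∈ range p, b (j - x) ≤ p := by
    simpa using sum_le_card_nsmul (range p) _ 1 fun x _ => hb (j - x)
  have hpath := h.forward_path_le hb (p := p) (k := k) (by omega) j
  rw [ZMod.natCast_zmod_val, sub_sub_cancel] at hpath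
  exact ⟨k - ∑ x ∈ range p, b (j - x), by omega,
    by linarith [sum_nonneg fun x (_ : x ∈ range p) => ht (j - x)]⟩

lemma eventually_mul_sub_le (h : IsTrainDynamics b t s d) (hb : ∀ j, b j ≤ 1)
    (ht : ∀ j, 0 ≤ t j) {μ C : ℝ} (hμ : 0 ≤ μ) {i : ZMod n} (hi : ∀ k, μ * k - C ≤ d k i)
    (j : ZMod n) : ∀ᶠ k : ℕ in atTop, μ * k - (C + μ * n) ≤ d k j := by
  filter_upwards [eventually_ge_atTop n] with k hk
  obtain ⟨k', hk', hdk'⟩ := h.exists_le_sub_card_le hb ht i j hk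
  have hkk' : (k : ℝ) ≤ k' + n := by exact_mod_cast (by omega : k ≤ k' + n)
  nlinarith [hi k']

lemma exists_le_potential_add (h : IsTrainDynamics b t s d) (hb : ∀ j, b j = 0 ∨ b j = 1)
    (ht : ∀ j, 0 < t j) (hs : ∀ j, 0 < s j) {v : ZMod n → ℝ} {μ : ℝ}
    (hv : ∀ j, v (j - 1) + t j ≤ v j + μ * b j ∧ v j + s j ≤ v (j - 1) + μ * (1 - b j)) :
    ∃ C, ∀ k j, d k j ≤ v j + μ * k + C := by
  obtain ⟨C, hC⟩ := Finite.exists_le fun j => d 0 j - v j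
  refine ⟨C, fun k => ?_⟩
  induction k with
  | zero => intro j; simpa using (sub_le_iff_le_add'.1 (hC j))
  | succ k ih =>
    -- Delay-free arcs strictly increase `d (k + 1)` since `t, s > 0`, so within the layer
    -- `k + 1` we may induct on the value of `d (k + 1)`.
    have hwf : WellFounded fun i j => d (k + 1) i < d (k + 1) j :=
      @Finite.wellFounded_of_trans_of_irrefl _ _ _ ⟨fun _ _ _ => lt_trans⟩ ⟨fun _ => lt_irrefl _⟩
    intro j
    induction j using hwf.induction with
    | _ j ihj =>
      have hfwd := h.forward_le (k := k + 1) (by omega) j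
      have hbwd := h.backward_le (k := k + 1) (by omega) j
      have hvj := (hv j).1
      have hvj1 := (hv (j + 1)).2
      rw [add_sub_cancel_right] at hvj1
      rw [h (k + 1) (by omega) j]
      push_cast at ihj ⊢
      refine max_le ?_ ?_
      · rcases hb j with hbj | hbj <;>
          simp only [hbj, Nat.cast_zero, Nat.cast_one, Nat.sub_zero, Nat.add_sub_cancel]
            at hfwd hvj ⊢
        · linarith [ihj (j - 1) (by linarith [ht j])]
        · linarith [ih (j - 1)]
      · rcases hb (j + 1) with hbj | hbj <;>
          simp only [hbj, Nat.cast_zero, Nat.cast_one, Nat.sub_zero, Nat.sub_self,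
            Nat.add_sub_cancel] at hbwd hvj1 ⊢
        · linarith [ih (j + 1)]
        · linarith [ihj (j + 1) (by linarith [hs (j + 1)])]

lemma exists_le_headway_mul_add (h : IsTrainDynamics b t s d) (hb : ∀ j, b j = 0 ∨ b j = 1)
    (ht : ∀ j, 0 < t j) (hs : ∀ j, 0 < s j) {m : ℕ} (hm : ∑ j, b j = m) (hm0 : 0 < m)
    (hmn : m < n) (j : ZMod n) : ∃ C, ∀ k, d k j ≤ headway m t s * k + C := by
  have hbm : ∑ j, (b j : ℝ) = m := by exact_mod_cast hm
  have h1bm : ∑ j, (1 - (b j : ℝ)) = n - m := by simp [sum_sub_distrib, hbm]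
  have hm0' : (0 : ℝ) < m := by exact_mod_cast hm0
  have hmn' : (0 : ℝ) < n - m := sub_pos.2 (by exact_mod_cast hmn)
  obtain ⟨v, hv⟩ := exists_potential (b := b) (μ := headway m t s)
    (fun j => (le_sup' (fun i => t i + s i) (mem_univ j)).trans
      ((le_max_right _ _).trans (le_max_left _ _)))
    (hbm ▸ (div_le_iff₀ hm0').1 ((le_max_left _ _).trans (le_max_left _ _)))
    (h1bm ▸ (div_le_iff₀ hmn').1 (le_max_right _ _))
  obtain ⟨C, hC⟩ := h.exists_le_potential_add hb ht hs hv
  exact ⟨v j + C, fun k => by linarith [hC k j]⟩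

lemma exists_headway_mul_sub_le (h : IsTrainDynamics b t s d) (hb : ∀ j, b j ≤ 1)
    (ht : ∀ j, 0 < t j) (hs : ∀ j, 0 < s j) {m : ℕ} (hm : ∑ j, b j = m) (hm0 : 0 < m)
    (hmn : m < n) (j : ZMod n) : ∃ C, ∀ᶠ k : ℕ in atTop, headway m t s * k - C ≤ d k j := by
  obtain hmax | hmax := max_choice (max ((∑ i, t i) / m) (univ.sup' univ_nonempty fun i => t i + s i))
    ((∑ i, s i) / ((n : ℝ) - m))
  · obtain hmax' | hmax' := max_choice ((∑ i, t i) / m) (univ.sup' univ_nonempty fun i => t i + s i)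
    · obtain ⟨C, hC⟩ := exists_div_mul_sub_le_of_add_le (f := (d · j)) hm0
        fun k hk => hm ▸ h.forward_loop_le hb hk j
      exact ⟨C, .of_forall fun k => by rw [headway, hmax, hmax']; exact hC k⟩
    · obtain ⟨i, -, hi⟩ := exists_mem_eq_sup' univ_nonempty fun i => t i + s i
      obtain ⟨C, hC⟩ := exists_div_mul_sub_le_of_add_le (f := (d · i)) (K := 2) one_pos
        fun k hk => h.pair_le hb (k := k) hk i
      rw [Nat.cast_one, div_one] at hC
      rw [headway, hmax, hmax', hi]
      exact ⟨_, h.eventually_mul_sub_le hb (fun j => (ht j).le) (add_pos (ht i) (hs i)).le hC j⟩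
  · obtain ⟨C, hC⟩ := exists_div_mul_sub_le_of_add_le (f := (d · j)) (p := n - m) (by omega)
      fun k hk => hm ▸ h.backward_loop_le hb hk j
    rw [Nat.cast_sub hmn.le] at hC
    exact ⟨C, .of_forall fun k => by rw [headway, hmax]; exact hC k⟩

end IsTrainDynamics

/-- Theorem 2 of the paper. For the Max-plus linear train dynamics
`d^k_j = max(d^{k−b_j}_{j−1} + t_j, d^{k−(1−b_{j+1})}_{j+1} + s_{j+1})` on `n`
segments (indexed by `ZMod n`), with `b j ∈ {0,1}`, `m = Σ_j b_j`, `0 < m < n`,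
demand-dependent travel times `t_j = g_j·X_j + r̃_j > 0` (`X_j ≥ 0`, `g_j > 0`,
`r̃_j > 0`) and `s_j > 0`, the average asymptotic growth rate `lim_k d^k_j/k`
exists, is the same for every `j`, and equals the average asymptotic headway
`h(m,X) = max{ (Σ_j (g_j X_j + r̃_j))/m , max_j (g_j X_j + r̃_j + s_j) , (Σ_j s_j)/(n−m) }`. -/
theorem stmt_9 (n : ℕ) [NeZero n]
    (b : ZMod n → ℕ) (hb : ∀ j, b j = 0 ∨ b j = 1)
    (m : ℕ) (hm : m = ∑ j, b j) (hm0 : 0 < m) (hmn : m < n)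
    (X g rtil s : ZMod n → ℝ)
    (hX : ∀ j, 0 ≤ X j) (hg : ∀ j, 0 < g j)
    (hrtil : ∀ j, 0 < rtil j) (hs : ∀ j, 0 < s j)
    (d : ℕ → ZMod n → ℝ)
    (hdyn : ∀ k, 1 ≤ k → ∀ j,
      d k j = max
        (d (k - b j) (j - 1) + (g j * X j + rtil j))
        (d (k - (1 - b (j + 1))) (j + 1) + s (j + 1))) :
    ∀ j, Tendsto (fun k : ℕ => d k j / k) atTop
      (nhds (max (max ((∑ i, (g i * X i + rtil i)) / m)
          (Finset.univ.sup' Finset.univ_nonempty (fun i => g i * X i + rtil i + s i)))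
        ((∑ i, s i) / ((n : ℝ) - m)))) := by
  intro j
  have hd : IsTrainDynamics b (fun i => g i * X i + rtil i) s d := hdyn
  have ht (i : ZMod n) : 0 < g i * X i + rtil i :=
    add_pos_of_nonneg_of_pos (mul_nonneg (hg i).le (hX i)) (hrtil i)
  have hb1 (i : ZMod n) : b i ≤ 1 := by rcases hb i with h | h <;> omega
  obtain ⟨C₁, hlow⟩ := hd.exists_headway_mul_sub_le hb1 ht hs hm.symm hm0 hmn j
  obtain ⟨C₂, hup⟩ := hd.exists_le_headway_mul_add hb ht hs hm.symm hm0 hmn j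
  exact tendsto_div_of_mul_sub_le_of_le_mul_add hlow (.of_forall hup)
end

section
/- (Corollary 1 of the paper.) Under the hypotheses of Theorem 2 (Max-plus linear dynamics d^k_j = max(d^{k−b_j}_{j−1} + t_j, d^{k−(1−b_{j+1})}_{j+1} + s_{j+1}) on n segments mod n, with b_j ∈ {0,1}, m = Σ_j b_j, 0 < m < n, t_j = g_j·X_j + r̃_j > 0, s_j > 0), the average asymptotic train frequency f(m,X) = lim_{k→∞} k / d^k_j exists for every j and equals f(m,X) = min{ m/(Σ_j (g_j·X_j + r̃_j)) , 1/(max_j (g_j·X_j + r̃_j + s_j)) , (n−m)/(Σ_j s_j) }. -/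
open Filter

lemma zsum (n : ℕ) [NeZero n] {M : Type*} [AddCommMonoid M] (f : ZMod n → M) :
    ∑ j, f j = ∑ i ∈ Finset.range n, f (i : ZMod n) := by
  refine Finset.sum_bij' (fun (j : ZMod n) (_ : j ∈ Finset.univ) => j.val)
    (fun (i : ℕ) (_ : i ∈ Finset.range n) => (i : ZMod n)) ?_ ?_ ?_ ?_ ?_
  · intro a _; exact Finset.mem_range.mpr (ZMod.val_lt a)
  · intro a _; exact Finset.mem_univ _
  · intro a _; exact ZMod.natCast_rightInverse a
  · intro a ha; exact ZMod.val_cast_of_lt (Finset.mem_range.mp ha)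
  · intro a _; rw [ZMod.natCast_rightInverse a]

lemma one_div_max {a b : ℝ} (ha : 0 < a) (hb : 0 < b) :
    1 / max a b = min (1 / a) (1 / b) := by
  rcases le_total a b with h | h
  · rw [max_eq_right h, min_eq_right (one_div_le_one_div_of_le ha h)]
  · rw [max_eq_left h, min_eq_left (one_div_le_one_div_of_le hb h)]

lemma exists_delta {ι : Type*} [Fintype ι] (L Uu : ι → ℝ) (hLU : ∀ i, L i ≤ Uu i)
    (hL : ∑ i, L i ≤ 0) (hU : 0 ≤ ∑ i, Uu i) :
    ∃ δ : ι → ℝ, (∑ i, δ i = 0) ∧ ∀ i, L i ≤ δ i ∧ δ i ≤ Uu i := by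
  set SL := ∑ i, L i with hSL
  set SU := ∑ i, Uu i with hSU
  have hden : 0 ≤ SU - SL := by linarith
  set θ := (-SL) / (SU - SL) with hθ
  have hθ0 : 0 ≤ θ := div_nonneg (by linarith) hden
  have hθ1 : θ ≤ 1 := by
    rcases eq_or_lt_of_le hden with h | h
    · rw [hθ, ← h, div_zero]; norm_num
    · rw [hθ, div_le_one h]; linarith
  have hmul : θ * (SU - SL) = -SL := by
    rcases eq_or_lt_of_le hden with h | h
    · have hSL0 : SL = 0 := by linarith
      rw [← h, mul_zero, hSL0, neg_zero]
    · rw [hθ, div_mul_cancel₀ _ h.ne']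
  refine ⟨fun i => L i + θ * (Uu i - L i), ?_, fun i => ⟨?_, ?_⟩⟩
  · have h1 : ∑ i, (L i + θ * (Uu i - L i)) = SL + θ * (SU - SL) := by
      rw [Finset.sum_add_distrib, ← Finset.mul_sum, Finset.sum_sub_distrib]
    rw [h1, hmul]; ring
  · show L i ≤ L i + θ * (Uu i - L i)
    have := mul_nonneg hθ0 (by linarith [hLU i] : (0:ℝ) ≤ Uu i - L i)
    linarith
  · show L i + θ * (Uu i - L i) ≤ Uu i
    have := mul_nonneg (by linarith : (0:ℝ) ≤ 1 - θ) (by linarith [hLU i] : (0:ℝ) ≤ Uu i - L i)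
    nlinarith

lemma rate_lower (u : ℕ → ℝ) (p K0 : ℕ) (hp : 0 < p) (W : ℝ)
    (h : ∀ k, K0 ≤ k → u (k - p) + W ≤ u k) :
    ∃ C : ℝ, ∀ k : ℕ, W / p * k - C ≤ u k := by
  have hne : (Finset.range (K0 + p)).Nonempty := by
    rw [Finset.nonempty_range_iff]; omega
  refine ⟨(Finset.range (K0 + p)).sup' hne (fun k => W / p * k - u k), ?_⟩
  intro k
  induction k using Nat.strong_induction_on with
  | _ k ih =>
    by_cases hk : k < K0 + p
    · have := Finset.le_sup' (fun k : ℕ => W / p * k - u k) (Finset.mem_range.mpr hk)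
      linarith
    · push_neg at hk
      have h1 := h k (by omega)
      have h2 := ih (k - p) (by omega)
      have hcast : ((k - p : ℕ) : ℝ) = (k : ℝ) - p := by
        rw [Nat.cast_sub (by omega)]
      have hWp : W / p * p = W := div_mul_cancel₀ W (by positivity : ((p:ℕ):ℝ) ≠ 0)
      rw [hcast] at h2
      nlinarith [h2]

lemma allk (u : ℕ → ℝ) (a : ℝ) (K : ℕ) (C : ℝ) (h : ∀ k, K ≤ k → a * k - C ≤ u k) :
    ∃ C' : ℝ, ∀ k : ℕ, a * k - C' ≤ u k := by
  have hne : (Finset.range (K + 1)).Nonempty := by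
    rw [Finset.nonempty_range_iff]; omega
  refine ⟨max C ((Finset.range (K + 1)).sup' hne (fun k => a * k - u k)), ?_⟩
  intro k
  by_cases hk : k < K + 1
  · have := Finset.le_sup' (fun k : ℕ => a * k - u k) (Finset.mem_range.mpr hk)
    have h2 := le_max_right C ((Finset.range (K + 1)).sup' hne (fun k => a * k - u k))
    linarith
  · have h1 := h k (by omega)
    have h2 := le_max_left C ((Finset.range (K + 1)).sup' hne (fun k => a * k - u k))
    linarith

lemma exists_potential_s10 (n : ℕ) [NeZero n] (δ : ZMod n → ℝ) (h : ∑ j, δ j = 0) :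
    ∃ c : ZMod n → ℝ, ∀ j, c j = c (j - 1) + δ j := by
  have hn1 : 1 ≤ n := Nat.one_le_iff_ne_zero.mpr (NeZero.ne n)
  refine ⟨fun j => ∑ i ∈ Finset.range j.val, δ ((i : ZMod n) + 1), fun j => ?_⟩
  by_cases hj : j = 0
  · subst hj
    have hneg : ((0 : ZMod n) - 1).val = n - 1 := by
      have h1 : ((n - 1 : ℕ) : ZMod n) = (0 : ZMod n) - 1 := by
        rw [Nat.cast_sub hn1, ZMod.natCast_self, Nat.cast_one]
      rw [← h1, ZMod.val_cast_of_lt (by omega)]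
    have h2 := zsum n δ
    have h3 := Finset.sum_range_succ' (fun i : ℕ => δ (i : ZMod n)) (n - 1)
    have e : n - 1 + 1 = n := by omega
    rw [e] at h3
    simp only [Nat.cast_zero, Nat.cast_add, Nat.cast_one] at h3
    show (∑ i ∈ Finset.range (0 : ZMod n).val, δ ((i : ZMod n) + 1)) =
      (∑ i ∈ Finset.range ((0:ZMod n) - 1).val, δ ((i : ZMod n) + 1)) + δ 0
    rw [ZMod.val_zero, hneg, Finset.sum_range_zero]
    rw [h2, h3] at h
    linarith
  · have hv : 1 ≤ j.val := by
      have := (ZMod.val_eq_zero j).not.mpr hj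
      omega
    have hjv : ((j.val : ℕ) : ZMod n) = j := ZMod.natCast_rightInverse j
    have hsub : j - 1 = ((j.val - 1 : ℕ) : ZMod n) := by
      rw [Nat.cast_sub hv, hjv, Nat.cast_one]
    have hval : (j - 1).val = j.val - 1 := by
      rw [hsub, ZMod.val_cast_of_lt (by have := ZMod.val_lt j; omega)]
    show (∑ i ∈ Finset.range j.val, δ ((i : ZMod n) + 1)) =
      (∑ i ∈ Finset.range (j - 1).val, δ ((i : ZMod n) + 1)) + δ j
    rw [hval]
    have h4 := Finset.sum_range_succ (fun i : ℕ => δ ((i : ZMod n) + 1)) (j.val - 1)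
    have e : j.val - 1 + 1 = j.val := by omega
    rw [e] at h4
    rw [h4]
    congr 1
    rw [Nat.cast_sub hv, hjv, Nat.cast_one]
    ring_nf

lemma tendsto_ratio (u : ℕ → ℝ) (lam C1 C2 : ℝ) (hlam : 0 < lam)
    (hlo : ∀ k, lam * k - C1 ≤ u k) (hhi : ∀ k, u k ≤ lam * k + C2) :
    Tendsto (fun k : ℕ => (k : ℝ) / u k) atTop (nhds (1 / lam)) := by
  have hg : Tendsto (fun k : ℕ => (lam + C2 / (k : ℝ))⁻¹) atTop (nhds lam⁻¹) := by
    refine Tendsto.inv₀ ?_ hlam.ne'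
    simpa using tendsto_const_nhds.add (tendsto_const_div_atTop_nhds_zero_nat C2)
  have hh : Tendsto (fun k : ℕ => (lam - C1 / (k : ℝ))⁻¹) atTop (nhds lam⁻¹) := by
    refine Tendsto.inv₀ ?_ hlam.ne'
    simpa using tendsto_const_nhds.sub (tendsto_const_div_atTop_nhds_zero_nat C1)
  have hto : Tendsto (fun k : ℕ => lam * (k : ℝ) - C1) atTop atTop := by
    apply tendsto_atTop_add_const_right
    exact (tendsto_natCast_atTop_atTop (R := ℝ)).const_mul_atTop hlam
  have hev : ∀ᶠ k : ℕ in atTop, 0 < lam * (k : ℝ) - C1 := hto.eventually_gt_atTop 0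
  have hev1 : ∀ᶠ k : ℕ in atTop, 1 ≤ k := eventually_ge_atTop 1
  have key : ∀ k : ℕ, 1 ≤ k → 0 < lam * (k : ℝ) - C1 →
      ((lam + C2 / (k : ℝ))⁻¹ ≤ (k : ℝ) / u k ∧ (k : ℝ) / u k ≤ (lam - C1 / (k : ℝ))⁻¹) := by
    intro k hk hpos
    have hk0 : (0 : ℝ) < k := by exact_mod_cast hk
    have hu : 0 < u k := lt_of_lt_of_le hpos (by linarith [hlo k])
    have e1 : (lam + C2 / (k : ℝ)) = (lam * k + C2) / k := by field_simp
    have e2 : (lam - C1 / (k : ℝ)) = (lam * k - C1) / k := by field_simp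
    constructor
    · rw [e1, inv_div]
      gcongr
      exact hhi k
    · rw [e2, inv_div]
      gcongr
      exact hlo k
  have h1 : ∀ᶠ k : ℕ in atTop, (lam + C2 / (k : ℝ))⁻¹ ≤ (k : ℝ) / u k := by
    filter_upwards [hev, hev1] with k h2 h3
    exact (key k h3 h2).1
  have h2 : ∀ᶠ k : ℕ in atTop, (k : ℝ) / u k ≤ (lam - C1 / (k : ℝ))⁻¹ := by
    filter_upwards [hev, hev1] with k h2 h3
    exact (key k h3 h2).2
  rw [one_div]
  exact tendsto_of_tendsto_of_tendsto_of_le_of_le' hg hh h1 h2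

theorem main_thm (n : ℕ) [NeZero n]
    (b : ZMod n → ℕ) (hb : ∀ j, b j = 0 ∨ b j = 1)
    (m : ℕ) (hm : m = ∑ j, b j) (hm0 : 0 < m) (hmn : m < n)
    (t s : ZMod n → ℝ) (ht : ∀ j, 0 < t j) (hs : ∀ j, 0 < s j)
    (d : ℕ → ZMod n → ℝ)
    (hdyn : ∀ k, 1 ≤ k → ∀ j,
      d k j = max (d (k - b j) (j - 1) + t j) (d (k - (1 - b (j + 1))) (j + 1) + s (j + 1))) :
    ∀ j, Tendsto (fun k : ℕ => (k : ℝ) / d k j) atTop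
      (nhds (min (min ((m : ℝ) / (∑ i, t i))
          (1 / Finset.univ.sup' Finset.univ_nonempty (fun i => t i + s i)))
        (((n : ℝ) - m) / (∑ i, s i)))) := by
  have hn0 : 0 < n := by omega
  -- abbreviations
  set T := ∑ i, t i with hTdef
  set S := ∑ i, s i with hSdef
  set Ms := Finset.univ.sup' Finset.univ_nonempty (fun i => t i + s i) with hMsdef
  set lam := max (max (T / (m : ℝ)) Ms) (S / ((n : ℝ) - m)) with hlamdef
  have hmpos : (0 : ℝ) < m := by exact_mod_cast hm0
  have hnm : (0 : ℝ) < (n : ℝ) - m := by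
    have : (m : ℝ) < n := by exact_mod_cast hmn
    linarith
  have hT : 0 < T := Finset.sum_pos (fun i _ => ht i) Finset.univ_nonempty
  have hS : 0 < S := Finset.sum_pos (fun i _ => hs i) Finset.univ_nonempty
  have hMs : 0 < Ms := by
    have h1 := Finset.le_sup' (fun i => t i + s i) (Finset.mem_univ (0 : ZMod n))
    have h2 : 0 < t 0 + s 0 := by linarith [ht 0, hs 0]
    rw [hMsdef]; exact lt_of_lt_of_le h2 h1
  have hlamT : T / (m : ℝ) ≤ lam := le_max_of_le_left (le_max_left _ _)
  have hlamMs : Ms ≤ lam := le_max_of_le_left (le_max_right _ _)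
  have hlamS : S / ((n : ℝ) - m) ≤ lam := le_max_right _ _
  have hlam_pos : 0 < lam := lt_of_lt_of_le hMs hlamMs
  have hlamts : ∀ i, t i + s i ≤ lam := fun i =>
    le_trans (Finset.le_sup' (fun i => t i + s i) (Finset.mem_univ i)) hlamMs
  -- existence of occupied / free segments
  obtain ⟨i0, hi0⟩ : ∃ i, b i = 1 := by
    have h1 : ∑ j, b j ≠ 0 := by omega
    obtain ⟨i, _, h2⟩ := Finset.exists_ne_zero_of_sum_ne_zero h1
    exact ⟨i, by rcases hb i with h | h <;> omega⟩
  obtain ⟨i1, hi1⟩ : ∃ i, b i = 0 := by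
    by_contra hcon
    push_neg at hcon
    have h1 : ∀ i : ZMod n, b i = 1 := by
      intro i
      rcases hb i with h | h
      · exact absurd h (hcon i)
      · exact h
    have h2 : m = n := by
      rw [hm, Finset.sum_congr rfl (fun i _ => h1 i)]
      simp [Finset.card_univ, ZMod.card]
    omega
  -- rank functions
  have hDex : ∀ j : ZMod n, ∃ l : ℕ, b (j - (l : ZMod n)) = 1 := by
    intro j
    refine ⟨(j - i0).val, ?_⟩
    rw [ZMod.natCast_rightInverse (j - i0), show j - (j - i0) = i0 from by ring]
    exact hi0
  have hUex : ∀ j : ZMod n, ∃ l : ℕ, b (j + 1 + (l : ZMod n)) = 0 := by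
    intro j
    refine ⟨(i1 - (j + 1)).val, ?_⟩
    rw [ZMod.natCast_rightInverse (i1 - (j + 1)),
      show j + 1 + (i1 - (j + 1)) = i1 from by ring]
    exact hi1
  have hDlt : ∀ j, Nat.find (hDex j) < n := by
    intro j
    refine lt_of_le_of_lt (Nat.find_le ?_) (ZMod.val_lt (j - i0))
    rw [ZMod.natCast_rightInverse (j - i0), show j - (j - i0) = i0 from by ring]
    exact hi0
  have hUlt : ∀ j, Nat.find (hUex j) < n := by
    intro j
    refine lt_of_le_of_lt (Nat.find_le ?_) (ZMod.val_lt (i1 - (j + 1)))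
    rw [ZMod.natCast_rightInverse (i1 - (j + 1)),
      show j + 1 + (i1 - (j + 1)) = i1 from by ring]
    exact hi1
  have hD0 : ∀ j : ZMod n, b j = 1 → Nat.find (hDex j) = 0 := by
    intro j hj
    rw [Nat.find_eq_zero]
    simpa using hj
  have hU0 : ∀ j : ZMod n, b (j + 1) = 0 → Nat.find (hUex j) = 0 := by
    intro j hj
    rw [Nat.find_eq_zero]
    simpa using hj
  have hDdec : ∀ j : ZMod n, b j = 0 → Nat.find (hDex (j - 1)) < Nat.find (hDex j) := by
    intro j hj
    have ha0 : Nat.find (hDex j) ≠ 0 := by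
      intro h0
      have := Nat.find_eq_zero (hDex j) |>.mp h0
      simp only [Nat.cast_zero, sub_zero] at this
      omega
    have hspec : b (j - (Nat.find (hDex j) : ZMod n)) = 1 := Nat.find_spec (hDex j)
    have hw : b ((j - 1) - ((Nat.find (hDex j) - 1 : ℕ) : ZMod n)) = 1 := by
      rw [Nat.cast_sub (by omega : 1 ≤ Nat.find (hDex j)), Nat.cast_one,
        show j - 1 - ((Nat.find (hDex j) : ZMod n) - 1) = j - (Nat.find (hDex j) : ZMod n)
          from by ring]
      exact hspec
    exact lt_of_le_of_lt (Nat.find_le hw) (by omega)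
  have hUdec : ∀ j : ZMod n, b (j + 1) = 1 → Nat.find (hUex (j + 1)) < Nat.find (hUex j) := by
    intro j hj
    have ha0 : Nat.find (hUex j) ≠ 0 := by
      intro h0
      have := Nat.find_eq_zero (hUex j) |>.mp h0
      simp only [Nat.cast_zero, add_zero] at this
      omega
    have hspec : b (j + 1 + (Nat.find (hUex j) : ZMod n)) = 0 := Nat.find_spec (hUex j)
    have hw : b ((j + 1) + 1 + ((Nat.find (hUex j) - 1 : ℕ) : ZMod n)) = 0 := by
      rw [Nat.cast_sub (by omega : 1 ≤ Nat.find (hUex j)), Nat.cast_one,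
        show j + 1 + 1 + ((Nat.find (hUex j) : ZMod n) - 1) = j + 1 + (Nat.find (hUex j) : ZMod n)
          from by ring]
      exact hspec
    exact lt_of_le_of_lt (Nat.find_le hw) (by omega)
  -- delta construction
  obtain ⟨δ, hδsum, hδb⟩ := exists_delta (fun i => t i - lam * (b i : ℝ))
      (fun i => lam * (1 - (b i : ℝ)) - s i)
      (by
        intro i
        show t i - lam * ((b i : ℕ) : ℝ) ≤ lam * (1 - ((b i : ℕ) : ℝ)) - s i
        have h1 := hlamts i
        have h2 : lam * ((b i : ℕ) : ℝ) + lam * (1 - (b i : ℕ)) = lam := by ring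
        linarith)
      (by
        have hbsum : ∑ i, ((b i : ℕ) : ℝ) = (m : ℝ) := by
          rw [hm, Nat.cast_sum]
        have h1 : ∑ i, (t i - lam * ((b i : ℕ) : ℝ)) = T - lam * m := by
          rw [Finset.sum_sub_distrib, ← Finset.mul_sum, hbsum, hTdef]
        rw [h1]
        have h2 : T ≤ lam * m := by
          rw [div_le_iff₀ hmpos] at hlamT
          linarith
        linarith)
      (by
        have hbsum : ∑ i, ((b i : ℕ) : ℝ) = (m : ℝ) := by
          rw [hm, Nat.cast_sum]
        have hone : ∑ _i : ZMod n, (1 : ℝ) = (n : ℝ) := by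
          simp [Finset.card_univ, ZMod.card]
        have h1 : ∑ i, (lam * (1 - ((b i : ℕ) : ℝ)) - s i) = lam * ((n : ℝ) - m) - S := by
          rw [Finset.sum_sub_distrib, ← Finset.mul_sum, Finset.sum_sub_distrib, hbsum, hone,
            hSdef]
        rw [h1]
        have h2 : S ≤ lam * ((n : ℝ) - m) := by
          rw [div_le_iff₀ hnm] at hlamS
          linarith
        linarith)
  have hδL : ∀ i, t i - lam * ((b i : ℕ) : ℝ) ≤ δ i := fun i => (hδb i).1
  have hδU : ∀ i, δ i ≤ lam * (1 - ((b i : ℕ) : ℝ)) - s i := fun i => (hδb i).2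
  obtain ⟨c', hc'⟩ := exists_potential_s10 n δ hδsum
  set C0 := Finset.univ.sup' Finset.univ_nonempty (fun j => d 0 j - c' j) with hC0def
  have hC0 : ∀ j, d 0 j ≤ c' j + C0 := by
    intro j
    have := Finset.le_sup' (fun j => d 0 j - c' j) (Finset.mem_univ j)
    rw [hC0def]
    linarith
  -- upper bound
  have hub : ∀ k R (j : ZMod n), Nat.find (hDex j) + Nat.find (hUex j) ≤ R →
      d k j ≤ lam * k + (c' j + C0) := by
    intro k
    induction k using Nat.strong_induction_on with
    | _ k ihk =>
      intro R
      induction R using Nat.strong_induction_on with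
      | _ R ihR =>
        intro j hj
        rcases Nat.eq_zero_or_pos k with rfl | hk
        · simpa using hC0 j
        rw [hdyn k hk j]
        apply max_le
        · -- first term
          have hcj := hc' j
          rcases hb j with hbj | hbj
          · -- b j = 0, same level
            have hdd := hDdec j hbj
            have hu0 : Nat.find (hUex (j - 1)) = 0 := by
              apply hU0
              rw [show j - 1 + 1 = j from by ring]
              exact hbj
            have h := ihR (Nat.find (hDex (j - 1)) + Nat.find (hUex (j - 1)))
              (by omega) (j - 1) le_rfl
            rw [hbj, Nat.sub_zero]
            have hδ := hδL j
            rw [hbj] at hδ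
            simp only [Nat.cast_zero, mul_zero, sub_zero] at hδ
            linarith
          · -- b j = 1, level drops
            have h := ihk (k - 1) (by omega)
              (Nat.find (hDex (j - 1)) + Nat.find (hUex (j - 1))) (j - 1) le_rfl
            rw [hbj]
            have hcast : ((k - 1 : ℕ) : ℝ) = (k : ℝ) - 1 := by
              rw [Nat.cast_sub hk, Nat.cast_one]
            rw [hcast] at h
            have hδ := hδL j
            rw [hbj] at hδ
            simp only [Nat.cast_one, mul_one] at hδ
            linarith
        · -- second term
          have hcj : c' (j + 1) = c' j + δ (j + 1) := by
            have := hc' (j + 1)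
            rwa [show j + 1 - 1 = j from by ring] at this
          rcases hb (j + 1) with hbj | hbj
          · -- b (j+1) = 0, level drops
            have h := ihk (k - 1) (by omega)
              (Nat.find (hDex (j + 1)) + Nat.find (hUex (j + 1))) (j + 1) le_rfl
            rw [hbj]
            have hcast : ((k - 1 : ℕ) : ℝ) = (k : ℝ) - 1 := by
              rw [Nat.cast_sub hk, Nat.cast_one]
            rw [hcast] at h
            have hδ := hδU (j + 1)
            rw [hbj] at hδ
            simp only [Nat.cast_zero, sub_zero, mul_one] at hδ
            simp only [Nat.sub_zero]
            linarith
          · -- b (j+1) = 1, same level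
            have huu := hUdec j hbj
            have hd0 : Nat.find (hDex (j + 1)) = 0 := hD0 (j + 1) hbj
            have h := ihR (Nat.find (hDex (j + 1)) + Nat.find (hUex (j + 1)))
              (by omega) (j + 1) le_rfl
            rw [hbj, Nat.sub_self, Nat.sub_zero]
            have hδ := hδU (j + 1)
            rw [hbj] at hδ
            simp only [Nat.cast_one, sub_self, mul_zero, zero_sub] at hδ
            linarith
  -- downward chain
  have hchainD : ∀ l k (j : ZMod n), l ≤ k →
      d (k - ∑ i ∈ Finset.range l, b (j - (i : ZMod n))) (j - (l : ZMod n)) +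
        ∑ i ∈ Finset.range l, t (j - (i : ZMod n)) ≤ d k j := by
    intro l
    induction l with
    | zero => intro k j _; simp
    | succ l ih =>
      intro k j hk
      have hbj := hb j
      have h1 : d (k - b j) (j - 1) + t j ≤ d k j := by
        rw [hdyn k (by omega) j]
        exact le_max_left _ _
      have h2 := ih (k - b j) (j - 1) (by omega)
      have eB : ∑ i ∈ Finset.range (l + 1), b (j - (i : ZMod n)) =
          b j + ∑ i ∈ Finset.range l, b ((j - 1) - (i : ZMod n)) := by
        rw [Finset.sum_range_succ', add_comm]
        congr 1
        · simp
        · refine Finset.sum_congr rfl (fun i _ => ?_)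
          congr 1
          push_cast
          ring
      have eT : ∑ i ∈ Finset.range (l + 1), t (j - (i : ZMod n)) =
          t j + ∑ i ∈ Finset.range l, t ((j - 1) - (i : ZMod n)) := by
        rw [Finset.sum_range_succ', add_comm]
        congr 1
        · simp
        · refine Finset.sum_congr rfl (fun i _ => ?_)
          congr 1
          push_cast
          ring
      have eJ : j - ((l + 1 : ℕ) : ZMod n) = (j - 1) - (l : ZMod n) := by
        push_cast
        ring
      have eK : k - ∑ i ∈ Finset.range (l + 1), b (j - (i : ZMod n)) =
          (k - b j) - ∑ i ∈ Finset.range l, b ((j - 1) - (i : ZMod n)) := by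
        rw [eB]; omega
      rw [eK, eJ, eT]
      linarith
  -- upward chain
  have hchainU : ∀ l k (j : ZMod n), l ≤ k →
      d (k - ∑ i ∈ Finset.range l, (1 - b (j + 1 + (i : ZMod n)))) (j + (l : ZMod n)) +
        ∑ i ∈ Finset.range l, s (j + 1 + (i : ZMod n)) ≤ d k j := by
    intro l
    induction l with
    | zero => intro k j _; simp
    | succ l ih =>
      intro k j hk
      have hbj := hb (j + 1)
      have h1 : d (k - (1 - b (j + 1))) (j + 1) + s (j + 1) ≤ d k j := by
        rw [hdyn k (by omega) j]
        exact le_max_right _ _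
      have h2 := ih (k - (1 - b (j + 1))) (j + 1) (by omega)
      have eB : ∑ i ∈ Finset.range (l + 1), (1 - b (j + 1 + (i : ZMod n))) =
          (1 - b (j + 1)) + ∑ i ∈ Finset.range l, (1 - b ((j + 1) + 1 + (i : ZMod n))) := by
        rw [Finset.sum_range_succ', add_comm]
        congr 1
        · simp
        · refine Finset.sum_congr rfl (fun i _ => ?_)
          congr 2
          push_cast
          ring
      have eS : ∑ i ∈ Finset.range (l + 1), s (j + 1 + (i : ZMod n)) =
          s (j + 1) + ∑ i ∈ Finset.range l, s ((j + 1) + 1 + (i : ZMod n)) := by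
        rw [Finset.sum_range_succ', add_comm]
        congr 1
        · simp
        · refine Finset.sum_congr rfl (fun i _ => ?_)
          congr 1
          push_cast
          ring
      have eJ : j + ((l + 1 : ℕ) : ZMod n) = (j + 1) + (l : ZMod n) := by
        push_cast
        ring
      have eK : k - ∑ i ∈ Finset.range (l + 1), (1 - b (j + 1 + (i : ZMod n))) =
          (k - (1 - b (j + 1))) - ∑ i ∈ Finset.range l, (1 - b ((j + 1) + 1 + (i : ZMod n))) := by
        rw [eB]; omega
      rw [eK, eJ, eS]
      linarith
  -- full loops
  have hloopD : ∀ k (j : ZMod n), n ≤ k → d (k - m) j + T ≤ d k j := by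
    intro k j hk
    have h := hchainD n k j hk
    have eB : ∑ i ∈ Finset.range n, b (j - (i : ZMod n)) = m := by
      have h1 := zsum n (fun x : ZMod n => b (j - x))
      have h2 : ∑ x : ZMod n, b (j - x) = ∑ x : ZMod n, b x :=
        Fintype.sum_equiv (Equiv.subLeft j) _ _ (fun x => rfl)
      rw [← h1, h2, ← hm]
    have eT : ∑ i ∈ Finset.range n, t (j - (i : ZMod n)) = T := by
      have h1 := zsum n (fun x : ZMod n => t (j - x))
      have h2 : ∑ x : ZMod n, t (j - x) = ∑ x : ZMod n, t x :=
        Fintype.sum_equiv (Equiv.subLeft j) _ _ (fun x => rfl)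
      rw [← h1, h2, hTdef]
    have eJ : j - ((n : ℕ) : ZMod n) = j := by
      rw [ZMod.natCast_self, sub_zero]
    rw [eB, eT, eJ] at h
    exact h
  have hloopU : ∀ k (j : ZMod n), n ≤ k → d (k - (n - m)) j + S ≤ d k j := by
    intro k j hk
    have h := hchainU n k j hk
    have eB : ∑ i ∈ Finset.range n, (1 - b (j + 1 + (i : ZMod n))) = n - m := by
      have h1 := zsum n (fun x : ZMod n => 1 - b (j + 1 + x))
      have h2 : ∑ x : ZMod n, (1 - b (j + 1 + x)) = ∑ x : ZMod n, (1 - b x) :=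
        Fintype.sum_equiv (Equiv.addLeft (j + 1)) _ _ (fun x => rfl)
      have h3 : ∑ x : ZMod n, ((1 - b x) + b x) = ∑ _x : ZMod n, 1 :=
        Finset.sum_congr rfl (fun x _ => by have := hb x; omega)
      rw [Finset.sum_add_distrib] at h3
      have h4 : ∑ _x : ZMod n, (1 : ℕ) = n := by
        simp [Finset.card_univ, ZMod.card]
      rw [← h1, h2]
      omega
    have eS : ∑ i ∈ Finset.range n, s (j + 1 + (i : ZMod n)) = S := by
      have h1 := zsum n (fun x : ZMod n => s (j + 1 + x))
      have h2 : ∑ x : ZMod n, s (j + 1 + x) = ∑ x : ZMod n, s x :=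
        Fintype.sum_equiv (Equiv.addLeft (j + 1)) _ _ (fun x => rfl)
      rw [← h1, h2, hSdef]
    have eJ : j + ((n : ℕ) : ZMod n) = j := by
      rw [ZMod.natCast_self, add_zero]
    rw [eB, eS, eJ] at h
    exact h
  -- two-cycle
  have hcyc : ∀ k (j : ZMod n), 2 ≤ k → d (k - 1) j + (t j + s j) ≤ d k j := by
    intro k j hk
    have hbj := hb j
    have h1 : d (k - b j) (j - 1) + t j ≤ d k j := by
      rw [hdyn k (by omega) j]
      exact le_max_left _ _
    have h2 : d ((k - b j) - (1 - b ((j - 1) + 1))) ((j - 1) + 1) + s ((j - 1) + 1) ≤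
        d (k - b j) (j - 1) := by
      rw [hdyn (k - b j) (by omega) (j - 1)]
      exact le_max_right _ _
    rw [show j - 1 + 1 = j from by ring] at h2
    have ek : (k - b j) - (1 - b j) = k - 1 := by omega
    rw [ek] at h2
    linarith
  -- which maximum is attained
  have hcase : lam = T / (m : ℝ) ∨ lam = Ms ∨ lam = S / ((n : ℝ) - m) := by
    rcases max_cases (max (T / (m : ℝ)) Ms) (S / ((n : ℝ) - m)) with ⟨h1, _⟩ | ⟨h1, _⟩
    · rcases max_cases (T / (m : ℝ)) Ms with ⟨h2, _⟩ | ⟨h2, _⟩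
      · left; rw [hlamdef, h1, h2]
      · right; left; rw [hlamdef, h1, h2]
    · right; right; rw [hlamdef, h1]
  -- lower bound
  have hlow : ∀ j : ZMod n, ∃ C : ℝ, ∀ k : ℕ, lam * k - C ≤ d k j := by
    rcases hcase with hc | hc | hc
    · intro j
      obtain ⟨C, hC⟩ := rate_lower (fun k => d k j) m n hm0 T (fun k hk => hloopD k j hk)
      refine ⟨C, fun k => ?_⟩
      have h1 := hC k
      rw [hc]
      exact h1
    · obtain ⟨j0, -, hj0⟩ := Finset.exists_mem_eq_sup' Finset.univ_nonempty
        (fun i => t i + s i)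
      obtain ⟨C0', hC0'⟩ := rate_lower (fun k => d k j0) 1 2 one_pos (t j0 + s j0)
        (fun k hk => hcyc k j0 hk)
      intro j
      have hBle : ∑ i ∈ Finset.range (j - j0).val, b (j - (i : ZMod n)) ≤ (j - j0).val := by
        calc ∑ i ∈ Finset.range (j - j0).val, b (j - (i : ZMod n))
            ≤ ∑ _i ∈ Finset.range (j - j0).val, 1 :=
              Finset.sum_le_sum (fun i _ => by have := hb (j - (i : ZMod n)); omega)
          _ = (j - j0).val := by simp
      have hvlt : (j - j0).val < n := ZMod.val_lt _
      have htrans : ∀ k, n ≤ k →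
          d (k - ∑ i ∈ Finset.range (j - j0).val, b (j - (i : ZMod n))) j0 ≤ d k j := by
        intro k hk
        have h := hchainD (j - j0).val k j (by omega)
        rw [ZMod.natCast_rightInverse (j - j0), show j - (j - j0) = j0 from by ring] at h
        have hpos : 0 ≤ ∑ i ∈ Finset.range (j - j0).val, t (j - (i : ZMod n)) :=
          Finset.sum_nonneg (fun i _ => (ht _).le)
        linarith
      have hk' : ∀ k, n ≤ k → lam * k - (C0' + lam * n) ≤ d k j := by
        intro k hk
        set B := ∑ i ∈ Finset.range (j - j0).val, b (j - (i : ZMod n)) with hB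
        have h1 := hC0' (k - B)
        simp only [Nat.cast_one, div_one] at h1
        have hcast : ((k - B : ℕ) : ℝ) = (k : ℝ) - B := by
          rw [Nat.cast_sub (by omega)]
        rw [hcast] at h1
        have h2 := htrans k hk
        have hlamval : lam = t j0 + s j0 := by rw [hc, hMsdef, hj0]
        have hBn : (B : ℝ) ≤ (n : ℝ) := by
          have : B ≤ n := by omega
          exact_mod_cast this
        have h3 : lam * ((k : ℝ) - B) - C0' ≤ d (k - B) j0 := by rw [hlamval]; linarith [h1]
        nlinarith [hlam_pos.le]
      exact allk (fun k => d k j) lam n (C0' + lam * n) hk'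
    · intro j
      obtain ⟨C, hC⟩ := rate_lower (fun k => d k j) (n - m) n (by omega) S
        (fun k hk => hloopU k j hk)
      refine ⟨C, fun k => ?_⟩
      have hcast : ((n - m : ℕ) : ℝ) = (n : ℝ) - m := by
        rw [Nat.cast_sub hmn.le]
      have h1 := hC k
      rw [hcast] at h1
      rw [hc]
      exact h1
  -- conclusion
  intro j
  obtain ⟨C1, hC1⟩ := hlow j
  have hC2 : ∀ k : ℕ, d k j ≤ lam * k + (c' j + C0) := fun k => hub k _ j le_rfl
  have htends := tendsto_ratio (fun k => d k j) lam C1 (c' j + C0) hlam_pos hC1 hC2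
  have hval : min (min ((m : ℝ) / T) (1 / Ms)) (((n : ℝ) - m) / S) = 1 / lam := by
    have hA : 0 < T / (m : ℝ) := div_pos hT hmpos
    have hB : 0 < S / ((n : ℝ) - m) := div_pos hS hnm
    rw [hlamdef, one_div_max (lt_max_of_lt_left hA) hB, one_div_max hA hMs,
      one_div_div, one_div_div]
  rw [hval]
  exact htends

/-- Corollary 1 of the paper. Under the hypotheses of Theorem 2, the average
asymptotic train frequency `f(m,X) = lim_k k/d^k_j` exists for every `j` and equals
`min{ m/(Σ_j (g_j X_j + r̃_j)) , 1/(max_j (g_j X_j + r̃_j + s_j)) , (n−m)/(Σ_j s_j) }`. -/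
theorem stmt_10 (n : ℕ) [NeZero n]
    (b : ZMod n → ℕ) (hb : ∀ j, b j = 0 ∨ b j = 1)
    (m : ℕ) (hm : m = ∑ j, b j) (hm0 : 0 < m) (hmn : m < n)
    (X g rtil s : ZMod n → ℝ)
    (hX : ∀ j, 0 ≤ X j) (hg : ∀ j, 0 < g j)
    (hrtil : ∀ j, 0 < rtil j) (hs : ∀ j, 0 < s j)
    (d : ℕ → ZMod n → ℝ)
    (hdyn : ∀ k, 1 ≤ k → ∀ j,
      d k j = max
        (d (k - b j) (j - 1) + (g j * X j + rtil j))
        (d (k - (1 - b (j + 1))) (j + 1) + s (j + 1))) :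
    ∀ j, Tendsto (fun k : ℕ => (k : ℝ) / d k j) atTop
      (nhds (min (min ((m : ℝ) / (∑ i, (g i * X i + rtil i)))
          (1 / Finset.univ.sup' Finset.univ_nonempty (fun i => g i * X i + rtil i + s i)))
        (((n : ℝ) - m) / (∑ i, s i)))) := by
  have ht : ∀ j, 0 < g j * X j + rtil j := fun j =>
    add_pos_of_nonneg_of_pos (mul_nonneg (hg j).le (hX j)) (hrtil j)
  exact main_thm n b hb m hm hm0 hmn (fun j => g j * X j + rtil j) s ht hs d hdyn
end
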